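/- Let H be a real Hilbert space, C ⊆ H a nonempty convex subset, T, U : C → C nonexpansive maps with a common fixed point p, u, x₀ ∈ C, and (α_n), (β_n) ⊂ [0,1]. Let (x_n) be the alternating Halpern–Mann iteration with anchor u and starting point x₀, and let N ∈ ℕ, N ≥ 1, satisfy N ≥ max{‖x₀ − p‖, ‖u − p‖}. Assume Γ2 : ℕ → ℕ satisfies ∑_{i=0}^{Γ2(k)} α_i ≥ k for all k ∈ ℕ, Γ3 : (0,∞) → ℕ is a Cauchy rate for ∑|α_{n+1} − α_n|, and Γ4 : (0,∞) → ℕ is a Cauchy rate for ∑|β_{n+1} − β_n|. Then for all ε > 0 and all n ≥ θ1(ε) one has ‖x_{2n+2} − x_{2n}‖ ≤ ε, where θ1(ε) := A(V(ε/2) + ⌈ln(4N/ε)⌉ + 1) + 1, A(k) := Γ2(k+1), and V(ε) := max{ Γ3(ε/(4N)), Γ4(ε/(4N)) }. -/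

import Mathlib

/-!
All iterates stay in `C ∩ closedBall p N`: this set is convex and, as `T` and `U` are
nonexpansive with common fixed point `p`, invariant under both maps. Comparing consecutive
steps of the iteration gives, for `w m = ‖x (2m+2) - x (2m)‖`, the recurrence
`w (m+1) ≤ (1 - α (m+1)) w m + 2N (|α (m+1) - α m| + |β (m+1) - β m|)`.
Unrolled from index `V(ε/2) + 1`, the Cauchy rates bound the accumulated perturbation by `ε/2`,
while `∏ (1 - α i) ≤ exp (-∑ α i) ≤ ε/(4N)` because `Γ2` makes `∑ α i ≥ ln (4N/ε)` by then.
-/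

noncomputable def Vrate (Γ3 Γ4 : ℝ → ℕ) (N : ℕ) (ε : ℝ) : ℕ :=
  max (Γ3 (ε / (4 * (N : ℝ)))) (Γ4 (ε / (4 * (N : ℝ))))

/-- `θ1(ε) := A(V(ε/2) + ⌈ln(4N/ε)⌉ + 1) + 1`, where `A(k) := Γ2(k+1)`. -/
noncomputable def theta1 (Γ2 : ℕ → ℕ) (Γ3 Γ4 : ℝ → ℕ) (N : ℕ) (ε : ℝ) : ℕ :=
  Γ2 (Vrate Γ3 Γ4 N (ε / 2) + ⌈Real.log (4 * (N : ℝ) / ε)⌉₊ + 1 + 1) + 1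

open Finset Metric

def IsCauchyRate (b : ℕ → ℝ) (V : ℝ → ℕ) : Prop :=
  ∀ ε : ℝ, 0 < ε → ∀ n : ℕ, ∑ i ∈ Icc (V ε + 1) (V ε + n), b i ≤ ε

theorem IsCauchyRate.sum_Ico_le {b : ℕ → ℝ} {V : ℝ → ℕ} (hV : IsCauchyRate b V)
    (hb : ∀ i, 0 ≤ b i) {ε : ℝ} (hε : 0 < ε) {M : ℕ} (hM : V ε ≤ M) (n : ℕ) :
    ∑ i ∈ Ico (M + 1) n, b i ≤ ε := by
  refine (sum_le_sum_of_subset_of_nonneg ?_ fun i _ _ ↦ hb i).trans (hV ε hε n)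
  intro i hi
  simp only [mem_Ico, mem_Icc] at hi ⊢
  omega

theorem le_mul_prod_add_sum_of_le_mul_add {w a c : ℕ → ℝ} (ha0 : ∀ n, 0 ≤ a n)
    (ha1 : ∀ n, a n ≤ 1) (hc : ∀ n, 0 ≤ c n) (hrec : ∀ n, w (n + 1) ≤ a (n + 1) * w n + c n)
    {m n : ℕ} (hmn : m ≤ n) :
    w n ≤ w m * ∏ i ∈ Icc (m + 1) n, a i + ∑ i ∈ Ico m n, c i := by
  induction n, hmn using Nat.le_induction with
  | base => simp
  | succ n hmn ih =>
    have hS : 0 ≤ ∑ i ∈ Ico m n, c i := sum_nonneg fun i _ ↦ hc i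
    rw [prod_Icc_succ_top (by omega), sum_Ico_succ_top hmn]
    calc w (n + 1) ≤ a (n + 1) * w n + c n := hrec n
      _ ≤ a (n + 1) * (w m * ∏ i ∈ Icc (m + 1) n, a i + ∑ i ∈ Ico m n, c i) + c n := by
          gcongr; exact ha0 _
      _ ≤ _ := by nlinarith [ha1 (n + 1), ha0 (n + 1)]

theorem prod_one_sub_le_exp_neg_sum (a : ℕ → ℝ) (ha : ∀ n, a n ≤ 1) (s : Finset ℕ) :
    ∏ i ∈ s, (1 - a i) ≤ Real.exp (-∑ i ∈ s, a i) := by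
  rw [← sum_neg_distrib, Real.exp_sum]
  exact prod_le_prod (fun i _ ↦ by linarith [ha i]) fun i _ ↦ Real.one_sub_le_exp_neg _

theorem sub_le_sum_Icc_of_le_sum_range {α : ℕ → ℝ} (hα : ∀ n, α n ∈ Set.Icc (0 : ℝ) 1)
    {k M m n : ℕ} (hk : (k : ℝ) ≤ ∑ i ∈ range (M + 1), α i) (hMn : M ≤ n) :
    (k : ℝ) - m ≤ ∑ i ∈ Icc m n, α i := by
  have hdisj : Disjoint (range m) (Icc m n) := disjoint_left.2 fun i hi hi' ↦ by
    simp only [mem_range, mem_Icc] at hi hi'; omega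
  have hsub : range (n + 1) ⊆ range m ∪ Icc m n := fun i hi ↦ by
    simp only [mem_union, mem_range, mem_Icc] at hi ⊢; omega
  have hhead : ∑ i ∈ range m, α i ≤ m := by
    simpa using sum_le_card_nsmul (range m) α 1 fun i _ ↦ (hα i).2
  rw [sub_le_iff_le_add']
  calc (k : ℝ) ≤ ∑ i ∈ range (n + 1), α i :=
        hk.trans (sum_le_sum_of_subset_of_nonneg (range_subset_range.2 (by omega))
          fun i _ _ ↦ (hα i).1)
    _ ≤ ∑ i ∈ range m ∪ Icc m n, α i := sum_le_sum_of_subset_of_nonneg hsub fun i _ _ ↦ (hα i).1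
    _ = ∑ i ∈ range m, α i + ∑ i ∈ Icc m n, α i := sum_union hdisj
    _ ≤ m + ∑ i ∈ Icc m n, α i := by linarith

theorem le_of_le_sum_range {α : ℕ → ℝ} (hα : ∀ n, α n ≤ 1) {k M : ℕ}
    (hk : (k : ℝ) ≤ ∑ i ∈ range (M + 1), α i) : k ≤ M + 1 := by
  have hsum_le : ∑ i ∈ range (M + 1), α i ≤ (M + 1 : ℕ) := by
    simpa using sum_le_card_nsmul (range (M + 1)) α 1 fun i _ ↦ hα i
  exact_mod_cast hk.trans hsum_le

theorem prod_one_sub_le_of_theta1_le {α : ℕ → ℝ} {Γ2 : ℕ → ℕ} {Γ3 Γ4 : ℝ → ℕ} {N : ℕ}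
    (hN : 0 < N) (hα : ∀ n, α n ∈ Set.Icc (0 : ℝ) 1)
    (hΓ2 : ∀ k : ℕ, (k : ℝ) ≤ ∑ i ∈ range (Γ2 k + 1), α i)
    {ε : ℝ} (hε : 0 < ε) {n : ℕ} (hn : theta1 Γ2 Γ3 Γ4 N ε ≤ n) :
    ∏ i ∈ Icc (Vrate Γ3 Γ4 N (ε / 2) + 2) n, (1 - α i) ≤ ε / (4 * N) := by
  set V := Vrate Γ3 Γ4 N (ε / 2)
  set L := ⌈Real.log (4 * (N : ℝ) / ε)⌉₊
  set k := V + L + 1 + 1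
  have hkn : Γ2 k + 1 ≤ n := hn
  have hL : Real.log (4 * N / ε) ≤ ∑ i ∈ Icc (V + 2) n, α i := by
    have hsum := sub_le_sum_Icc_of_le_sum_range hα (hΓ2 k) (m := V + 2) (n := n) (by omega)
    have hceil : Real.log (4 * N / ε) ≤ L := Nat.le_ceil _
    push_cast [k] at hsum
    linarith
  calc ∏ i ∈ Icc (V + 2) n, (1 - α i) ≤ Real.exp (-∑ i ∈ Icc (V + 2) n, α i) :=
        prod_one_sub_le_exp_neg_sum α (fun i ↦ (hα i).2) _
    _ ≤ Real.exp (-Real.log (4 * N / ε)) := Real.exp_le_exp.2 (neg_le_neg hL)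
    _ = ε / (4 * N) := by
        rw [Real.exp_neg, Real.exp_log (by positivity), inv_div]

theorem le_of_theta1_le {w α β : ℕ → ℝ} {Γ2 : ℕ → ℕ} {Γ3 Γ4 : ℝ → ℕ} {N : ℕ} (hN : 0 < N)
    (hα : ∀ n, α n ∈ Set.Icc (0 : ℝ) 1)
    (hΓ2 : ∀ k : ℕ, (k : ℝ) ≤ ∑ i ∈ range (Γ2 k + 1), α i)
    (hΓ3 : IsCauchyRate (fun i ↦ |α (i + 1) - α i|) Γ3)
    (hΓ4 : IsCauchyRate (fun i ↦ |β (i + 1) - β i|) Γ4)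
    (hw : ∀ n, w n ≤ 2 * N)
    (hrec : ∀ n, w (n + 1) ≤
      (1 - α (n + 1)) * w n + 2 * N * (|α (n + 1) - α n| + |β (n + 1) - β n|))
    {ε : ℝ} (hε : 0 < ε) {n : ℕ} (hn : theta1 Γ2 Γ3 Γ4 N ε ≤ n) : w n ≤ ε := by
  set V := Vrate Γ3 Γ4 N (ε / 2)
  have hN0 : (0 : ℝ) < N := by exact_mod_cast hN
  have hδ : 0 < ε / 2 / (4 * (N : ℝ)) := by positivity
  have hαV := hΓ3.sum_Ico_le (fun i ↦ abs_nonneg _) hδ (M := V) (le_max_left _ _) n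
  have hβV := hΓ4.sum_Ico_le (fun i ↦ abs_nonneg _) hδ (M := V) (le_max_right _ _) n
  have hsum : ∑ i ∈ Ico (V + 1) n, 2 * (N : ℝ) * (|α (i + 1) - α i| + |β (i + 1) - β i|)
      ≤ ε / 2 := by
    rw [← mul_sum, sum_add_distrib]
    calc _ ≤ 2 * (N : ℝ) * (ε / 2 / (4 * N) + ε / 2 / (4 * N)) := by gcongr
      _ = ε / 2 := by field_simp; ring
  have hprod := prod_one_sub_le_of_theta1_le hN hα hΓ2 hε hn
  have hVn : V + 1 ≤ n := by
    set k := V + ⌈Real.log (4 * (N : ℝ) / ε)⌉₊ + 1 + 1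
    have hkn : Γ2 k + 1 ≤ n := hn
    have hk : k ≤ Γ2 k + 1 := le_of_le_sum_range (fun i ↦ (hα i).2) (hΓ2 k)
    omega
  calc w n ≤ w (V + 1) * ∏ i ∈ Icc (V + 1 + 1) n, (1 - α i)
        + ∑ i ∈ Ico (V + 1) n, 2 * (N : ℝ) * (|α (i + 1) - α i| + |β (i + 1) - β i|) :=
        le_mul_prod_add_sum_of_le_mul_add (fun i ↦ sub_nonneg.2 (hα i).2)
          (fun i ↦ sub_le_self _ (hα i).1) (fun i ↦ by positivity) hrec hVn
    _ ≤ 2 * N * (ε / (4 * N)) + ε / 2 := by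
        gcongr
        · exact prod_nonneg fun i _ ↦ sub_nonneg.2 (hα i).2
        · exact hw _
    _ = ε := by field_simp; ring

section Iteration

variable {E : Type*} [NormedAddCommGroup E]

theorem norm_sub_le_two_mul_of_mem_closedBall {p a b : E} {R : ℝ} (ha : a ∈ closedBall p R)
    (hb : b ∈ closedBall p R) : ‖a - b‖ ≤ 2 * R := by
  rw [← dist_eq_norm]
  linarith [dist_triangle_right a b p, mem_closedBall.1 ha, mem_closedBall.1 hb]

theorem Set.MapsTo.inter_closedBall_of_nonexpansive {C : Set E} {T : E → E}
    (hT : Set.MapsTo T C C) (hTne : ∀ x ∈ C, ∀ y ∈ C, ‖T x - T y‖ ≤ ‖x - y‖)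
    {p : E} (hp : p ∈ C) (hTp : T p = p) (R : ℝ) :
    Set.MapsTo T (C ∩ closedBall p R) (C ∩ closedBall p R) := fun y ⟨hyC, hyR⟩ ↦ by
  refine ⟨hT hyC, ?_⟩
  rw [mem_closedBall_iff_norm] at hyR ⊢
  calc ‖T y - p‖ = ‖T y - T p‖ := by rw [hTp]
    _ ≤ ‖y - p‖ := hTne y hyC p hp
    _ ≤ R := hyR

variable [NormedSpace ℝ E]

theorem norm_halpern_sub_le (T : E → E) {a b u : E} {s t : ℝ} (hs : s ∈ Set.Icc (0 : ℝ) 1)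
    (hab : ‖T a - T b‖ ≤ ‖a - b‖) :
    ‖((1 - s) • T a + s • u) - ((1 - t) • T b + t • u)‖
      ≤ (1 - s) * ‖a - b‖ + |s - t| * ‖u - T b‖ := by
  have hs1 : 0 ≤ 1 - s := sub_nonneg.2 hs.2
  calc ‖((1 - s) • T a + s • u) - ((1 - t) • T b + t • u)‖
        = ‖(1 - s) • (T a - T b) + (s - t) • (u - T b)‖ := by congr 1; module
    _ ≤ (1 - s) * ‖T a - T b‖ + |s - t| * ‖u - T b‖ := by
        refine (norm_add_le _ _).trans_eq ?_
        rw [norm_smul, norm_smul, Real.norm_eq_abs, Real.norm_eq_abs, abs_of_nonneg hs1]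
    _ ≤ (1 - s) * ‖a - b‖ + |s - t| * ‖u - T b‖ := by gcongr

theorem norm_mann_sub_le (U : E → E) {a b : E} {s t : ℝ} (hs : s ∈ Set.Icc (0 : ℝ) 1)
    (hab : ‖U a - U b‖ ≤ ‖a - b‖) :
    ‖((1 - s) • U a + s • a) - ((1 - t) • U b + t • b)‖ ≤ ‖a - b‖ + |s - t| * ‖U b - b‖ := by
  have hs1 : 0 ≤ 1 - s := sub_nonneg.2 hs.2
  calc ‖((1 - s) • U a + s • a) - ((1 - t) • U b + t • b)‖
        = ‖(1 - s) • (U a - U b) + s • (a - b) + (t - s) • (U b - b)‖ := by congr 1; module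
    _ ≤ (1 - s) * ‖U a - U b‖ + s * ‖a - b‖ + |s - t| * ‖U b - b‖ := by
        refine (norm_add₃_le).trans_eq ?_
        rw [norm_smul, norm_smul, norm_smul, Real.norm_eq_abs, Real.norm_eq_abs,
          Real.norm_eq_abs, abs_of_nonneg hs1, abs_of_nonneg hs.1, abs_sub_comm t s]
    _ ≤ (1 - s) * ‖a - b‖ + s * ‖a - b‖ + |s - t| * ‖U b - b‖ := by gcongr
    _ = ‖a - b‖ + |s - t| * ‖U b - b‖ := by ring

variable {K : Set E} {T U : E → E} {u : E} {α β : ℕ → ℝ} {x : ℕ → E}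

theorem alternatingHalpernMann_mem (hK : Convex ℝ K) (hT : Set.MapsTo T K K)
    (hU : Set.MapsTo U K K) (hu : u ∈ K) (hα : ∀ n, α n ∈ Set.Icc (0 : ℝ) 1)
    (hβ : ∀ n, β n ∈ Set.Icc (0 : ℝ) 1) (hx0 : x 0 ∈ K)
    (hxodd : ∀ n, x (2 * n + 1) = (1 - α n) • T (x (2 * n)) + α n • u)
    (hxeven : ∀ n, x (2 * n + 2) = (1 - β n) • U (x (2 * n + 1)) + β n • x (2 * n + 1))
    (n : ℕ) : x n ∈ K := by
  have hodd (m : ℕ) (h : x (2 * m) ∈ K) : x (2 * m + 1) ∈ K :=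
    hxodd m ▸ hK (hT h) hu (sub_nonneg.2 (hα m).2) (hα m).1 (sub_add_cancel 1 _)
  have heven (m : ℕ) (h : x (2 * m + 1) ∈ K) : x (2 * m + 2) ∈ K :=
    hxeven m ▸ hK (hU h) h (sub_nonneg.2 (hβ m).2) (hβ m).1 (sub_add_cancel 1 _)
  have hev (m : ℕ) : x (2 * m) ∈ K := by
    induction m with
    | zero => exact hx0
    | succ m ih => exact heven m (hodd m ih)
  obtain ⟨m, rfl | rfl⟩ := Nat.even_or_odd' n
  exacts [hev m, hodd m (hev m)]

theorem alternatingHalpernMann_norm_sub_le {p : E} {R : ℝ} (hKR : K ⊆ closedBall p R)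
    (hT : Set.MapsTo T K K) (hU : Set.MapsTo U K K)
    (hTne : ∀ x ∈ K, ∀ y ∈ K, ‖T x - T y‖ ≤ ‖x - y‖)
    (hUne : ∀ x ∈ K, ∀ y ∈ K, ‖U x - U y‖ ≤ ‖x - y‖) (hu : u ∈ K)
    (hα : ∀ n, α n ∈ Set.Icc (0 : ℝ) 1) (hβ : ∀ n, β n ∈ Set.Icc (0 : ℝ) 1)
    (hxK : ∀ n, x n ∈ K)
    (hxodd : ∀ n, x (2 * n + 1) = (1 - α n) • T (x (2 * n)) + α n • u)
    (hxeven : ∀ n, x (2 * n + 2) = (1 - β n) • U (x (2 * n + 1)) + β n • x (2 * n + 1))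
    (m : ℕ) :
    ‖x (2 * m + 4) - x (2 * m + 2)‖ ≤ (1 - α (m + 1)) * ‖x (2 * m + 2) - x (2 * m)‖
      + 2 * R * (|α (m + 1) - α m| + |β (m + 1) - β m|) := by
  have hodd : ‖x (2 * m + 3) - x (2 * m + 1)‖
      ≤ (1 - α (m + 1)) * ‖x (2 * m + 2) - x (2 * m)‖ + |α (m + 1) - α m| * (2 * R) := by
    rw [show x (2 * m + 3) = _ from hxodd (m + 1), hxodd m]
    refine (norm_halpern_sub_le T (hα (m + 1)) (hTne _ (hxK _) _ (hxK _))).trans ?_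
    exact add_le_add le_rfl (mul_le_mul_of_nonneg_left
      (norm_sub_le_two_mul_of_mem_closedBall (hKR hu) (hKR (hT (hxK _)))) (abs_nonneg _))
  have heven : ‖x (2 * m + 4) - x (2 * m + 2)‖
      ≤ ‖x (2 * m + 3) - x (2 * m + 1)‖ + |β (m + 1) - β m| * (2 * R) := by
    rw [show x (2 * m + 4) = _ from hxeven (m + 1), hxeven m]
    refine (norm_mann_sub_le U (hβ (m + 1)) (hUne _ (hxK _) _ (hxK _))).trans ?_
    exact add_le_add le_rfl (mul_le_mul_of_nonneg_left
      (norm_sub_le_two_mul_of_mem_closedBall (hKR (hU (hxK _))) (hKR (hxK _))) (abs_nonneg _))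
  linarith

end Iteration

theorem stmt8_general {H : Type*} [NormedAddCommGroup H] [InnerProductSpace ℝ H]
    (C : Set H) (hCconv : Convex ℝ C)
    (T U : H → H) (hTmaps : Set.MapsTo T C C) (hUmaps : Set.MapsTo U C C)
    (hTne : ∀ x ∈ C, ∀ y ∈ C, ‖T x - T y‖ ≤ ‖x - y‖)
    (hUne : ∀ x ∈ C, ∀ y ∈ C, ‖U x - U y‖ ≤ ‖x - y‖)
    (p : H) (hp : p ∈ C) (hTp : T p = p) (hUp : U p = p)
    (u x₀ : H) (hu : u ∈ C) (hx₀ : x₀ ∈ C)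
    (α β : ℕ → ℝ)
    (hα : ∀ n, α n ∈ Set.Icc (0 : ℝ) 1) (hβ : ∀ n, β n ∈ Set.Icc (0 : ℝ) 1)
    (x : ℕ → H) (hx0 : x 0 = x₀)
    (hxodd : ∀ n, x (2 * n + 1) = (1 - α n) • T (x (2 * n)) + α n • u)
    (hxeven : ∀ n, x (2 * n + 2) = (1 - β n) • U (x (2 * n + 1)) + β n • x (2 * n + 1))
    (N : ℕ) (hN1 : 1 ≤ N)
    (hN : max ‖x₀ - p‖ ‖u - p‖ ≤ (N : ℝ))
    (Γ2 : ℕ → ℕ) (Γ3 Γ4 : ℝ → ℕ)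
    (hΓ2 : ∀ k : ℕ, (k : ℝ) ≤ ∑ i ∈ Finset.range (Γ2 k + 1), α i)
    (hΓ3 : ∀ ε : ℝ, 0 < ε → ∀ n : ℕ,
      ∑ i ∈ Finset.Icc (Γ3 ε + 1) (Γ3 ε + n), |α (i + 1) - α i| ≤ ε)
    (hΓ4 : ∀ ε : ℝ, 0 < ε → ∀ n : ℕ,
      ∑ i ∈ Finset.Icc (Γ4 ε + 1) (Γ4 ε + n), |β (i + 1) - β i| ≤ ε) :
    ∀ ε : ℝ, 0 < ε → ∀ n ≥ theta1 Γ2 Γ3 Γ4 N ε,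
      ‖x (2 * n + 2) - x (2 * n)‖ ≤ ε := by
  intro ε hε n hn
  have hTK := hTmaps.inter_closedBall_of_nonexpansive hTne hp hTp N
  have hUK := hUmaps.inter_closedBall_of_nonexpansive hUne hp hUp N
  have huK : u ∈ C ∩ closedBall p N :=
    ⟨hu, mem_closedBall_iff_norm.2 ((le_max_right _ _).trans hN)⟩
  have hx0K : x 0 ∈ C ∩ closedBall p N :=
    hx0 ▸ ⟨hx₀, mem_closedBall_iff_norm.2 ((le_max_left _ _).trans hN)⟩
  have hxK : ∀ n, x n ∈ C ∩ closedBall p N :=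
    alternatingHalpernMann_mem (hCconv.inter (convex_closedBall p N)) hTK hUK huK hα hβ hx0K
      hxodd hxeven
  have hrec := alternatingHalpernMann_norm_sub_le Set.inter_subset_right hTK hUK
    (fun a ha b hb ↦ hTne a ha.1 b hb.1) (fun a ha b hb ↦ hUne a ha.1 b hb.1) huK hα hβ hxK
    hxodd hxeven
  exact le_of_theta1_le (w := fun i ↦ ‖x (2 * i + 2) - x (2 * i)‖) hN1 hα hΓ2 hΓ3 hΓ4
    (fun i ↦ norm_sub_le_two_mul_of_mem_closedBall (hxK _).2 (hxK _).2) hrec hε hn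

/-- Rate of convergence `θ1` for `‖x_{2n+2} - x_{2n}‖ → 0` for the alternating
Halpern–Mann iteration in a Hilbert space. -/
theorem stmt8 {H : Type*} [NormedAddCommGroup H] [InnerProductSpace ℝ H]
    (C : Set H) (hCne : C.Nonempty) (hCconv : Convex ℝ C)
    (T U : H → H) (hTmaps : Set.MapsTo T C C) (hUmaps : Set.MapsTo U C C)
    (hTne : ∀ x ∈ C, ∀ y ∈ C, ‖T x - T y‖ ≤ ‖x - y‖)
    (hUne : ∀ x ∈ C, ∀ y ∈ C, ‖U x - U y‖ ≤ ‖x - y‖)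
    (p : H) (hp : p ∈ C) (hTp : T p = p) (hUp : U p = p)
    (u x₀ : H) (hu : u ∈ C) (hx₀ : x₀ ∈ C)
    (α β : ℕ → ℝ)
    (hα : ∀ n, α n ∈ Set.Icc (0 : ℝ) 1) (hβ : ∀ n, β n ∈ Set.Icc (0 : ℝ) 1)
    (x : ℕ → H) (hx0 : x 0 = x₀)
    (hxodd : ∀ n, x (2 * n + 1) = (1 - α n) • T (x (2 * n)) + α n • u)
    (hxeven : ∀ n, x (2 * n + 2) = (1 - β n) • U (x (2 * n + 1)) + β n • x (2 * n + 1))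
    (N : ℕ) (hN1 : 1 ≤ N)
    (hN : max ‖x₀ - p‖ ‖u - p‖ ≤ (N : ℝ))
    (Γ2 : ℕ → ℕ) (Γ3 Γ4 : ℝ → ℕ)
    (hΓ2 : ∀ k : ℕ, (k : ℝ) ≤ ∑ i ∈ Finset.range (Γ2 k + 1), α i)
    (hΓ3 : ∀ ε : ℝ, 0 < ε → ∀ n : ℕ,
      ∑ i ∈ Finset.Icc (Γ3 ε + 1) (Γ3 ε + n), |α (i + 1) - α i| ≤ ε)
    (hΓ4 : ∀ ε : ℝ, 0 < ε → ∀ n : ℕ,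
      ∑ i ∈ Finset.Icc (Γ4 ε + 1) (Γ4 ε + n), |β (i + 1) - β i| ≤ ε) :
    ∀ ε : ℝ, 0 < ε → ∀ n ≥ theta1 Γ2 Γ3 Γ4 N ε,
      ‖x (2 * n + 2) - x (2 * n)‖ ≤ ε :=
  stmt8_general C hCconv T U hTmaps hUmaps hTne hUne p hp hTp hUp u x₀ hu hx₀ α β hα hβ x hx0 hxodd
    hxeven N hN1 hN Γ2 Γ3 Γ4 hΓ2 hΓ3 hΓ4
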